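/- arXiv:2410.11474 — 3 statements merged into one kernel-verified Lean document; each statement's English description precedes it below -/
import Mathlib

section
/- For any vectors θ, θ' ∈ ℝ^d, the softmax function satisfies ‖softmax(θ) − softmax(θ')‖₁ ≤ 2‖θ − θ'‖_∞. -/
noncomputable def softmax {n : ℕ} (θ : Fin n → ℝ) (i : Fin n) : ℝ :=
  Real.exp (θ i) / ∑ j, Real.exp (θ j)

/-- ℓ¹-Lipschitzness of softmax w.r.t. the ℓ∞ norm. -/
theorem softmax_l1_lipschitz {d : ℕ} (θ θ' : Fin d → ℝ) :
    ∑ i, |softmax θ i - softmax θ' i| ≤ 2 * ⨆ i, |θ i - θ' i| := by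
  rcases Nat.eq_zero_or_pos d with hd | hd
  · subst hd
    simp [iSup_of_empty', Real.sSup_empty]
  haveI : Nonempty (Fin d) := ⟨⟨0, hd⟩⟩
  set A := ∑ j, Real.exp (θ j) with hAdef
  set B := ∑ j, Real.exp (θ' j) with hBdef
  have hA : 0 < A := Finset.sum_pos (fun j _ => Real.exp_pos _) ⟨⟨0, hd⟩, Finset.mem_univ _⟩
  have hB : 0 < B := Finset.sum_pos (fun j _ => Real.exp_pos _) ⟨⟨0, hd⟩, Finset.mem_univ _⟩
  set M := ⨆ i, |θ i - θ' i| with hMdef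
  have hM : ∀ i, |θ i - θ' i| ≤ M :=
    fun i => le_ciSup (Set.Finite.bddAbove (Set.finite_range (fun j => |θ j - θ' j|))) i
  have hM0 : 0 ≤ M := le_trans (abs_nonneg _) (hM ⟨0, hd⟩)
  set c := Real.log (A / B) with hcdef
  set p := softmax θ with hpdef
  set q := softmax θ' with hqdef
  have hp : ∀ i, 0 < p i := fun i => div_pos (Real.exp_pos _) hA
  have hq : ∀ i, 0 < q i := fun i => div_pos (Real.exp_pos _) hB
  have hkey : ∀ i, q i = p i * Real.exp (θ' i - θ i + c) := by
    intro i
    simp only [hpdef, hqdef, softmax, hcdef, ← hAdef, ← hBdef]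
    rw [Real.exp_add, Real.exp_log (div_pos hA hB), Real.exp_sub]
    field_simp
  have hsum_p : ∑ i, p i = 1 := by
    simp only [hpdef, softmax, ← hAdef, ← Finset.sum_div]
    exact div_self hA.ne'
  have hsum_q : ∑ i, q i = 1 := by
    simp only [hqdef, softmax, ← hBdef, ← Finset.sum_div]
    exact div_self hB.ne'
  -- one-sided linear bounds
  have h1 : ∀ i, p i - q i ≤ p i * (θ i - θ' i - c) := by
    intro i
    have h := Real.add_one_le_exp (θ' i - θ i + c)
    nlinarith [hp i, hkey i]
  have h2 : ∀ i, q i - p i ≤ q i * (θ' i - θ i + c) := by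
    intro i
    have h := Real.add_one_le_exp (-(θ' i - θ i + c))
    have he : Real.exp (-(θ' i - θ i + c)) * Real.exp (θ' i - θ i + c) = 1 := by
      rw [← Real.exp_add, show -(θ' i - θ i + c) + (θ' i - θ i + c) = 0 by ring, Real.exp_zero]
    have hqX : q i * Real.exp (-(θ' i - θ i + c)) = p i := by
      rw [hkey i]
      calc p i * Real.exp (θ' i - θ i + c) * Real.exp (-(θ' i - θ i + c))
          = p i * (Real.exp (-(θ' i - θ i + c)) * Real.exp (θ' i - θ i + c)) := by ring
        _ = p i := by rw [he, mul_one]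
    have hmul := mul_le_mul_of_nonneg_left h (hq i).le
    nlinarith [hqX]
  set S := Finset.univ.filter (fun i => q i < p i) with hSdef
  set Sc := Finset.univ.filter (fun i => ¬ q i < p i) with hScdef
  have hsplit : ∑ i, |p i - q i| = ∑ i ∈ S, (p i - q i) + ∑ i ∈ Sc, (q i - p i) := by
    rw [← Finset.sum_filter_add_sum_filter_not Finset.univ (fun i => q i < p i)
      (fun i => |p i - q i|)]
    congr 1
    · exact Finset.sum_congr rfl fun i hi => abs_of_pos
        (sub_pos.mpr (Finset.mem_filter.mp hi).2)
    · refine Finset.sum_congr rfl fun i hi => ?_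
      have : p i ≤ q i := not_lt.mp (Finset.mem_filter.mp hi).2
      rw [abs_of_nonpos (by linarith), neg_sub]
  have htot : ∑ i ∈ S, (p i - q i) = ∑ i ∈ Sc, (q i - p i) := by
    have h0 : ∑ i, (p i - q i) = 0 := by
      rw [Finset.sum_sub_distrib, hsum_p, hsum_q]; ring
    have := Finset.sum_filter_add_sum_filter_not Finset.univ (fun i => q i < p i)
      (fun i => p i - q i)
    have : ∑ i ∈ S, (p i - q i) + ∑ i ∈ Sc, (p i - q i) = 0 := by rw [this, h0]
    have hneg : ∑ i ∈ Sc, (q i - p i) = - ∑ i ∈ Sc, (p i - q i) := by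
      rw [← Finset.sum_neg_distrib]; exact Finset.sum_congr rfl fun i _ => by ring
    linarith
  -- partial mass bounds
  have hpS0 : 0 ≤ ∑ i ∈ S, p i := Finset.sum_nonneg fun i _ => (hp i).le
  have hpS1 : ∑ i ∈ S, p i ≤ 1 := by
    rw [← hsum_p]
    exact Finset.sum_le_sum_of_subset_of_nonneg (Finset.subset_univ S)
      (fun i _ _ => (hp i).le)
  have hqS0 : 0 ≤ ∑ i ∈ Sc, q i := Finset.sum_nonneg fun i _ => (hq i).le
  have hqS1 : ∑ i ∈ Sc, q i ≤ 1 := by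
    rw [← hsum_q]
    exact Finset.sum_le_sum_of_subset_of_nonneg (Finset.subset_univ Sc)
      (fun i _ _ => (hq i).le)
  -- the two bounds on the one-sided deviation T
  have hb1 : ∑ i ∈ S, (p i - q i) ≤ (M - c) * ∑ i ∈ S, p i := by
    rw [Finset.mul_sum]
    refine Finset.sum_le_sum fun i _ => le_trans (h1 i) ?_
    have h := hM i
    have : θ i - θ' i ≤ M := le_trans (le_abs_self _) h
    nlinarith [hp i]
  have hb2 : ∑ i ∈ Sc, (q i - p i) ≤ (M + c) * ∑ i ∈ Sc, q i := by
    rw [Finset.mul_sum]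
    refine Finset.sum_le_sum fun i _ => le_trans (h2 i) ?_
    have h := hM i
    have : θ' i - θ i ≤ M := by rw [abs_sub_comm] at h; exact le_trans (le_abs_self _) h
    nlinarith [hq i]
  have hT : ∑ i ∈ S, (p i - q i) ≤ M := by
    rcases le_total 0 c with hc | hc
    · nlinarith
    · rw [htot]; nlinarith
  calc ∑ i, |p i - q i| = ∑ i ∈ S, (p i - q i) + ∑ i ∈ Sc, (q i - p i) := hsplit
    _ = 2 * ∑ i ∈ S, (p i - q i) := by rw [← htot]; ring
    _ ≤ 2 * M := by linarith
end

section
/- Let x₁, …, x_{L} ∈ ℝ^d with ‖x_s‖_∞ ≤ 1 for all s, and let a, b ∈ ℝ^{L} be two score vectors. Then ‖∑_s x_s·softmax(a)_s − ∑_s x_s·softmax(b)_s‖_∞ ≤ 2·max_s |a_s − b_s|. -/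
/-- A softmax-weighted average of bounded tokens is 2-Lipschitz in the scores
    (ℓ∞ in, ℓ∞ out). -/
theorem softmax_average_lipschitz (d L : ℕ) (x : Fin L → Fin d → ℝ)
    (hx : ∀ s i, |x s i| ≤ 1) (a b : Fin L → ℝ) :
    ∀ i : Fin d,
      |∑ s, x s i * softmax a s - ∑ s, x s i * softmax b s|
        ≤ 2 * ⨆ s, |a s - b s| := by
  intro i
  rcases Nat.eq_zero_or_pos L with hL | hL
  · subst hL
    simp [ciSup_of_empty, Real.sSup_empty]
  haveI : Nonempty (Fin L) := Fin.pos_iff_nonempty.mp hL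
  set ε := ⨆ s, |a s - b s| with hεdef
  set c : Fin L → ℝ := fun s => b s - a s with hc
  have hεb : ∀ s, |c s| ≤ ε := fun s => by
    rw [hc, abs_sub_comm]
    exact le_ciSup (f := fun s => |a s - b s|)
      (Set.Finite.bddAbove (Set.finite_range _)) s
  have hε0 : 0 ≤ ε := le_trans (abs_nonneg _) (hεb (Classical.arbitrary _))
  set N : ℝ → Fin L → ℝ := fun t s => Real.exp (a s + t * c s) with hN
  set D : ℝ → ℝ := fun t => ∑ s, N t s with hD
  have hDpos : ∀ t, 0 < D t := fun t =>
    Finset.sum_pos (fun s _ => Real.exp_pos _) Finset.univ_nonempty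
  set E : ℝ → Fin L → ℝ := fun t s => N t s / D t with hE
  have hEnn : ∀ t s, 0 ≤ E t s := fun t s =>
    div_nonneg (Real.exp_pos _).le (hDpos t).le
  have hEsum : ∀ t, ∑ s, E t s = 1 := fun t => by
    rw [hE]
    simp only [← Finset.sum_div]
    exact div_self (hDpos t).ne'
  set M : ℝ → ℝ := fun t => ∑ s, E t s * c s with hM
  have hMbound : ∀ t, |M t| ≤ ε := by
    intro t
    calc |M t| ≤ ∑ s, |E t s * c s| := Finset.abs_sum_le_sum_abs _ _
      _ ≤ ∑ s, E t s * ε := by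
          refine Finset.sum_le_sum fun s _ => ?_
          rw [abs_mul, abs_of_nonneg (hEnn t s)]
          exact mul_le_mul_of_nonneg_left (hεb s) (hEnn t s)
      _ = ε := by rw [← Finset.sum_mul, hEsum, one_mul]
  set g : ℝ → ℝ := fun t => ∑ s, x s i * E t s with hg
  set g' : ℝ → ℝ := fun t => ∑ s, x s i * (E t s * (c s - M t)) with hg'
  have hNderiv : ∀ t s, HasDerivAt (fun u => N u s) (c s * N t s) t := by
    intro t s
    have h1 : HasDerivAt (fun u : ℝ => a s + u * c s) (c s) t := by
      simpa using ((hasDerivAt_id t).mul_const (c s)).const_add (a s)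
    simpa [hN, mul_comm] using h1.exp
  have hDderiv : ∀ t, HasDerivAt D (∑ s, c s * N t s) t := fun t =>
    HasDerivAt.fun_sum (fun s _ => hNderiv t s)
  have hgderiv : ∀ t, HasDerivAt g (g' t) t := by
    intro t
    apply HasDerivAt.fun_sum
    intro s _
    have hdiv := (hNderiv t s).div (hDderiv t) (hDpos t).ne'
    have h2 := hdiv.const_mul (x s i)
    convert h2 using 1
    · rfl
    · rfl
    have hDne : D t ≠ 0 := (hDpos t).ne'
    have hMalt : M t = (∑ τ, c τ * N t τ) / D t := by
      rw [hM, Finset.sum_div]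
      exact Finset.sum_congr rfl fun τ _ => by rw [hE]; ring
    rw [hE, hMalt]
    field_simp
  have hg'bound : ∀ t, |g' t| ≤ 2 * ε := by
    intro t
    calc |g' t| ≤ ∑ s, |x s i * (E t s * (c s - M t))| :=
          Finset.abs_sum_le_sum_abs _ _
      _ ≤ ∑ s, E t s * (2 * ε) := by
          refine Finset.sum_le_sum fun s _ => ?_
          rw [abs_mul, abs_mul, abs_of_nonneg (hEnn t s)]
          have h1 : |x s i| * (E t s * |c s - M t|) ≤ 1 * (E t s * (2 * ε)) := by
            refine mul_le_mul (hx s i) ?_ (by positivity) zero_le_one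
            apply mul_le_mul_of_nonneg_left _ (hEnn t s)
            calc |c s - M t| ≤ |c s| + |M t| := abs_sub _ _
              _ ≤ ε + ε := add_le_add (hεb s) (hMbound t)
              _ = 2 * ε := by ring
          linarith
      _ = 2 * ε := by rw [← Finset.sum_mul, hEsum, one_mul]
  have key : ‖g 1 - g 0‖ ≤ (2 * ε) * ‖(1 : ℝ) - 0‖ := by
    apply Convex.norm_image_sub_le_of_norm_hasDerivWithin_le
      (f' := g') (s := Set.univ)
      (fun t _ => (hgderiv t).hasDerivWithinAt)
      (fun t _ => hg'bound t) convex_univ (Set.mem_univ _) (Set.mem_univ _)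
  have hg0 : g 0 = ∑ s, x s i * softmax a s := by
    refine Finset.sum_congr rfl fun s _ => ?_
    simp [hE, hN, hD, softmax]
  have hg1 : g 1 = ∑ s, x s i * softmax b s := by
    refine Finset.sum_congr rfl fun s _ => ?_
    simp [hE, hN, hD, hc, softmax]
  rw [← hg0, ← hg1, abs_sub_comm]
  simpa using key
end

section
/- Let w* ∈ (0, 1/√2) and define w° = sqrt( (3 − 4w*⁴ − sqrt((4w*⁴ − 3)² − 16w*⁴)) / (8w*²) ). Then for small enough w* (say 0 < w* ≤ 0.3), w° ≥ w*/2. -/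
/-- The turning-point threshold w° is at least w*/2 for small w*. -/
theorem turning_point_lower_bound (w : ℝ) (hw : 0 < w) (hw' : w ≤ 0.3) :
    w / 2 ≤ Real.sqrt
      ((3 - 4 * w ^ 4 - Real.sqrt ((4 * w ^ 4 - 3) ^ 2 - 16 * w ^ 4))
        / (8 * w ^ 2)) := by
  have hw2 : (0:ℝ) < 8 * w ^ 2 := by positivity
  have h36 : (0:ℝ) ≤ 3 - 6 * w ^ 4 := by nlinarith [pow_le_pow_left₀ hw.le hw' 4]
  have hsle : Real.sqrt ((4 * w ^ 4 - 3) ^ 2 - 16 * w ^ 4) ≤ 3 - 6 * w ^ 4 := by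
    have h1 : (4 * w ^ 4 - 3) ^ 2 - 16 * w ^ 4 ≤ (3 - 6 * w ^ 4) ^ 2 := by nlinarith [pow_pos hw 4]
    calc Real.sqrt ((4 * w ^ 4 - 3) ^ 2 - 16 * w ^ 4)
        ≤ Real.sqrt ((3 - 6 * w ^ 4) ^ 2) := Real.sqrt_le_sqrt h1
      _ = 3 - 6 * w ^ 4 := Real.sqrt_sq h36
  rw [show w / 2 = Real.sqrt ((w / 2) ^ 2) from (Real.sqrt_sq (by positivity)).symm]
  apply Real.sqrt_le_sqrt
  rw [le_div_iff₀ hw2]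
  nlinarith
end
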